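/- arXiv:1704.00932 — 2 statements merged into one kernel-verified Lean document; each statement's English description precedes it below -/
import Mathlib

section
/- Let α' : ℝ^D → U(m) (m ≥ 2) be a continuous ℤ^D-periodic family of unitary matrices whose eigenvalues λ_1(k), …, λ_m(k) admit a continuous labelling and are non-degenerate (pairwise distinct) for every k. Then all eigenvalues have the same winding number in each coordinate direction: if φ_j is a continuous argument of λ_j with φ_j(k + e_l) = φ_j(k) + 2π n_j^{(l)}, then n_i^{(l)} = n_j^{(l)} for all i, j and all directions l. -/
/-- For a continuous `ℤ^D`-periodic family of unitary matrices with a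
continuous non-degenerate labelling of its eigenvalues (`m ≥ 2`), all eigenvalues have
the same winding number in each coordinate direction. -/
theorem eigenvalue_winding_numbers_coincide (D m : ℕ) (hm : 2 ≤ m)
    (α : (Fin D → ℝ) → Matrix (Fin m) (Fin m) ℂ)
    (hcont : Continuous α)
    (hunit : ∀ k, α k ∈ Matrix.unitaryGroup (Fin m) ℂ)
    (hper : ∀ (k : Fin D → ℝ) (n : Fin D → ℤ), α (k + fun i => (n i : ℝ)) = α k)
    -- continuous labelling of the eigenvalues
    (lam : Fin m → (Fin D → ℝ) → ℂ)
    (hlamcont : ∀ j, Continuous (lam j))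
    (hlamspec : ∀ j k, lam j k ∈ spectrum ℂ (α k))
    -- non-degeneracy: the eigenvalues are pairwise distinct at every `k`
    (hnondeg : ∀ k, Function.Injective fun j => lam j k)
    -- continuous arguments and winding numbers of the eigenvalues
    (φ : Fin m → (Fin D → ℝ) → ℝ)
    (hφcont : ∀ j, Continuous (φ j))
    (hφarg : ∀ j k, lam j k = Complex.exp (Complex.I * (φ j k : ℂ)))
    (n : Fin m → Fin D → ℤ)
    (hwind : ∀ j (k : Fin D → ℝ) (l : Fin D),
      φ j (k + Pi.single l (1 : ℝ)) = φ j k + 2 * Real.pi * (n j l : ℝ)) :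
    ∀ i j l, n i l = n j l := by
  intro i j l
  rcases eq_or_ne i j with rfl | hij
  · rfl
  by_contra hne
  have hπ : (0:ℝ) < 2 * Real.pi := by positivity
  set e : Fin D → ℝ := Pi.single l 1 with he
  obtain ⟨f, hf⟩ : ∃ f : ℝ → ℝ, f = fun t => φ i (t • e) - φ j (t • e) := ⟨_, rfl⟩
  have hfc : Continuous f := by
    rw [hf]
    exact ((hφcont i).comp (continuous_id.smul continuous_const)).sub
      ((hφcont j).comp (continuous_id.smul continuous_const))
  have hf0 : f 0 = φ i 0 - φ j 0 := by simp [hf]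
  have hf1 : f 1 = f 0 + 2 * Real.pi * ((n i l : ℝ) - (n j l : ℝ)) := by
    have hi := hwind i 0 l
    have hj := hwind j 0 l
    simp only [zero_add] at hi hj
    simp only [hf, hf0, one_smul, zero_smul, he, hi, hj]
    ring
  have hd : (n i l : ℝ) - (n j l : ℝ) ≠ 0 := by
    have : (n i l : ℝ) ≠ (n j l : ℝ) := by exact_mod_cast hne
    exact sub_ne_zero_of_ne this
  obtain ⟨M, hM⟩ : ∃ M : ℤ, 2 * Real.pi * M ∈ Set.uIcc (f 0) (f 1) := by
    rcases lt_or_gt_of_ne hd with hdlt | hdgt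
    · refine ⟨⌊f 0 / (2 * Real.pi)⌋, ?_⟩
      have h1 : 2 * Real.pi * ⌊f 0 / (2 * Real.pi)⌋ ≤ f 0 := by
        have := Int.floor_le (f 0 / (2 * Real.pi))
        calc 2 * Real.pi * ⌊f 0 / (2 * Real.pi)⌋ ≤ 2 * Real.pi * (f 0 / (2 * Real.pi)) := by
              exact mul_le_mul_of_nonneg_left this (le_of_lt hπ)
          _ = f 0 := by field_simp
      have h2 : f 1 ≤ 2 * Real.pi * ⌊f 0 / (2 * Real.pi)⌋ := by
        have hfl : f 0 / (2 * Real.pi) - 1 < ⌊f 0 / (2 * Real.pi)⌋ := Int.sub_one_lt_floor _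
        have : f 0 - 2 * Real.pi < 2 * Real.pi * ⌊f 0 / (2 * Real.pi)⌋ := by
          have := mul_lt_mul_of_pos_left hfl hπ
          calc f 0 - 2 * Real.pi = 2 * Real.pi * (f 0 / (2 * Real.pi) - 1) := by field_simp
            _ < _ := this
        have hzi : n i l < n j l := by
          have : (n i l : ℝ) < (n j l : ℝ) := by linarith
          exact_mod_cast this
        have hdle : (n i l : ℝ) - (n j l : ℝ) ≤ -1 := by
          have h1' : n i l + 1 ≤ n j l := hzi
          have : (n i l : ℝ) + 1 ≤ (n j l : ℝ) := by exact_mod_cast h1'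
          linarith
        have := mul_le_mul_of_nonneg_left hdle (le_of_lt hπ)
        nlinarith
      exact Set.mem_uIcc.mpr (Or.inr ⟨h2, h1⟩)
    · refine ⟨⌈f 0 / (2 * Real.pi)⌉, ?_⟩
      have h1 : f 0 ≤ 2 * Real.pi * ⌈f 0 / (2 * Real.pi)⌉ := by
        have := Int.le_ceil (f 0 / (2 * Real.pi))
        calc f 0 = 2 * Real.pi * (f 0 / (2 * Real.pi)) := by field_simp
          _ ≤ _ := mul_le_mul_of_nonneg_left this (le_of_lt hπ)
      have h2 : 2 * Real.pi * ⌈f 0 / (2 * Real.pi)⌉ ≤ f 1 := by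
        have hfl : (⌈f 0 / (2 * Real.pi)⌉ : ℝ) < f 0 / (2 * Real.pi) + 1 := Int.ceil_lt_add_one _
        have : 2 * Real.pi * ⌈f 0 / (2 * Real.pi)⌉ < f 0 + 2 * Real.pi := by
          have := mul_lt_mul_of_pos_left hfl hπ
          calc 2 * Real.pi * ⌈f 0 / (2 * Real.pi)⌉ < 2 * Real.pi * (f 0 / (2 * Real.pi) + 1) := this
            _ = f 0 + 2 * Real.pi := by field_simp
        have hzi : n j l < n i l := by
          have : (n j l : ℝ) < (n i l : ℝ) := by linarith
          exact_mod_cast this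
        have hdge : (1:ℝ) ≤ (n i l : ℝ) - (n j l : ℝ) := by
          have h1' : n j l + 1 ≤ n i l := hzi
          have : (n j l : ℝ) + 1 ≤ (n i l : ℝ) := by exact_mod_cast h1'
          linarith
        have := mul_le_mul_of_nonneg_left hdge (le_of_lt hπ)
        nlinarith
      exact Set.mem_uIcc.mpr (Or.inl ⟨h1, h2⟩)
  obtain ⟨t, -, hft⟩ := intermediate_value_uIcc (hfc.continuousOn (s := Set.uIcc 0 1)) hM
  have hftv : φ i (t • e) = φ j (t • e) + 2 * Real.pi * M := by
    have : f t = 2 * Real.pi * M := hft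
    simp only [hf] at this
    linarith
  have hlam : lam i (t • e) = lam j (t • e) := by
    rw [hφarg, hφarg, hftv]
    push_cast
    rw [show Complex.I * ((φ j (t • e) : ℂ) + 2 * Real.pi * M)
        = Complex.I * (φ j (t • e) : ℂ) + M * (2 * Real.pi * Complex.I) by ring,
      Complex.exp_add, Complex.exp_int_mul_two_pi_mul_I, mul_one]
  exact hij (hnondeg (t • e) hlam)
end

section
/- (Combes–Thomas estimate, discrete case) Let H₀ be a bounded self-adjoint operator on ℓ²(ℤ²) ⊗ ℂ^Q whose matrix elements satisfy |H₀(γ,x;γ',x')| ≤ C e^{−β₀‖γ−γ'‖}, and let K be a compact subset of the resolvent set of H₀. Then there exist C' > 0 and 0 < β < β₀ such that sup_{z∈K} |(H₀ − z)^{-1}(γ,x;γ',x')| ≤ C' e^{−β‖γ−γ'‖} for all γ, γ' ∈ ℤ², x, x' ∈ {1,…,Q}. -/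
/-- A norm on the lattice `ℤ²`. -/
noncomputable def znorm (γ : ℤ × ℤ) : ℝ := |(γ.1 : ℝ)| + |(γ.2 : ℝ)|

/-- The Hilbert space `ℓ²(ℤ²) ⊗ ℂ^Q`. -/
noncomputable abbrev MagneticSpace (Q : ℕ) := lp (fun _ : (ℤ × ℤ) × Fin Q => ℂ) 2

/-- The canonical basis vector `δ_{γ,x}` of `ℓ²(ℤ²) ⊗ ℂ^Q`. -/
noncomputable def deltaVec (Q : ℕ) (γ : ℤ × ℤ) (x : Fin Q) : MagneticSpace Q :=
  lp.single 2 (γ, x) (1 : ℂ)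

/-!
Let `g` be the distance to `γ'` truncated at `‖γ - γ'‖`: it is bounded and `1`-Lipschitz, so
`e^{±βg}` are bounded multiplication operators. Conjugation by them multiplies the matrix elements
of `H₀` by `e^{β(g_i - g_j)}`, and since `|e^x - 1| ≤ |x| e^{|x|}` the Schur test bounds
`‖e^{βg} H₀ e^{-βg} - H₀‖` by `O(β)`, uniformly in `γ, γ'`. The resolvent is bounded uniformly on
the compact `K`, so for small `β` the conjugated resolvent `e^{βg} (H₀ - z)⁻¹ e^{-βg}` has norm at
most twice that bound; its `(γ, γ')` entry is `e^{β‖γ - γ'‖}` times that of `(H₀ - z)⁻¹`.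
-/

open scoped lp ENNReal

noncomputable section

section Schur

variable {ι : Type*}

lemma sq_tsum_mul_le {k a : ι → ℝ} (hk : ∀ j, 0 ≤ k j) (hk_sum : Summable k)
    (hka_sum : Summable fun j => k j * a j ^ 2) :
    (∑' j, k j * a j) ^ 2 ≤ (∑' j, k j) * ∑' j, k j * a j ^ 2 := by
  have hka : Summable fun j => k j * a j := by
    refine (hk_sum.add hka_sum).of_norm_bounded fun j => ?_
    rw [norm_mul, Real.norm_of_nonneg (hk j), Real.norm_eq_abs]
    nlinarith [hk j, sq_nonneg (|a j| - 1), sq_abs (a j)]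
  refine le_of_tendsto' (hka.hasSum.pow 2) fun s => ?_
  calc (∑ j ∈ s, k j * a j) ^ 2 ≤ (∑ j ∈ s, k j) * ∑ j ∈ s, k j * a j ^ 2 :=
        Finset.sum_sq_le_sum_mul_sum_of_sq_le_mul s (fun j _ => hk j)
          (fun j _ => mul_nonneg (hk j) (sq_nonneg _)) fun j _ => le_of_eq (by ring)
    _ ≤ (∑' j, k j) * ∑' j, k j * a j ^ 2 :=
        mul_le_mul (hk_sum.sum_le_tsum s fun j _ => hk j)
          (hka_sum.sum_le_tsum s fun j _ => mul_nonneg (hk j) (sq_nonneg _))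
          (Finset.sum_nonneg fun j _ => mul_nonneg (hk j) (sq_nonneg _))
          (tsum_nonneg hk)

lemma lp.hasSum_norm_sq (x : ℓ²(ι, ℂ)) : HasSum (fun i => ‖x i‖ ^ 2) (‖x‖ ^ 2) := by
  simpa [Real.rpow_two] using lp.hasSum_norm (p := 2) (by norm_num) x

variable [DecidableEq ι]

def matrixEntry (A : ℓ²(ι, ℂ) →L[ℂ] ℓ²(ι, ℂ)) (i j : ι) : ℂ := A (lp.single 2 j 1) i

lemma matrixEntry_sub (A B : ℓ²(ι, ℂ) →L[ℂ] ℓ²(ι, ℂ)) (i j : ι) :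
    matrixEntry (A - B) i j = matrixEntry A i j - matrixEntry B i j := rfl

lemma norm_matrixEntry_le (A : ℓ²(ι, ℂ) →L[ℂ] ℓ²(ι, ℂ)) (i j : ι) :
    ‖matrixEntry A i j‖ ≤ ‖A‖ :=
  calc ‖matrixEntry A i j‖ ≤ ‖A (lp.single 2 j 1)‖ := lp.norm_apply_le_norm two_ne_zero _ i
    _ ≤ ‖A‖ * ‖(lp.single 2 j 1 : ℓ²(ι, ℂ))‖ := A.le_opNorm _
    _ = ‖A‖ := by rw [lp.norm_single (by norm_num), norm_one, mul_one]

lemma hasSum_matrixEntry_mul (A : ℓ²(ι, ℂ) →L[ℂ] ℓ²(ι, ℂ)) (x : ℓ²(ι, ℂ)) (i : ι) :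
    HasSum (fun j => matrixEntry A i j * x j) (A x i) := by
  have h := (lp.evalCLM ℂ (fun _ : ι => ℂ) 2 i).hasSum
    (A.hasSum (lp.hasSum_single ENNReal.ofNat_ne_top x))
  refine h.congr_fun fun j => ?_
  change _ = A (lp.single 2 j (x j)) i
  have hsingle : (lp.single 2 j (x j) : ℓ²(ι, ℂ)) = x j • lp.single 2 j 1 := by
    rw [← lp.single_smul, smul_eq_mul, mul_one]
  rw [hsingle, map_smul, lp.coeFn_smul, Pi.smul_apply, smul_eq_mul, mul_comm]
  rfl

lemma norm_apply_sq_le_of_matrixEntry_le {A : ℓ²(ι, ℂ) →L[ℂ] ℓ²(ι, ℂ)} {k : ι → ι → ℝ}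
    (hA : ∀ i j, ‖matrixEntry A i j‖ ≤ k i j) (hrow : ∀ i, Summable (k i))
    (x : ℓ²(ι, ℂ)) (i : ι) :
    ‖A x i‖ ^ 2 ≤ (∑' j, k i j) * ∑' j, k i j * ‖x j‖ ^ 2 := by
  have hk : ∀ j, 0 ≤ k i j := fun j => (norm_nonneg _).trans (hA i j)
  have hx : ∀ j, ‖x j‖ ≤ ‖x‖ := fun j => lp.norm_apply_le_norm (by norm_num) x j
  have hkx : Summable fun j => k i j * ‖x j‖ :=
    ((hrow i).mul_right ‖x‖).of_nonneg_of_le (fun j => mul_nonneg (hk j) (norm_nonneg _))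
      fun j => mul_le_mul_of_nonneg_left (hx j) (hk j)
  have hkx2 : Summable fun j => k i j * ‖x j‖ ^ 2 :=
    ((hrow i).mul_right (‖x‖ ^ 2)).of_nonneg_of_le (fun j => by have := hk j; positivity)
      fun j => mul_le_mul_of_nonneg_left (pow_le_pow_left₀ (norm_nonneg _) (hx j) 2) (hk j)
  have hAx : ‖A x i‖ ≤ ∑' j, k i j * ‖x j‖ :=
    (hasSum_matrixEntry_mul A x i).norm_le_of_bounded hkx.hasSum fun j => by
      rw [norm_mul]
      exact mul_le_mul_of_nonneg_right (hA i j) (norm_nonneg (x j))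
  calc ‖A x i‖ ^ 2 ≤ (∑' j, k i j * ‖x j‖) ^ 2 := pow_le_pow_left₀ (norm_nonneg _) hAx 2
    _ ≤ _ := sq_tsum_mul_le hk (hrow i) hkx2

theorem opNorm_le_of_schur {A : ℓ²(ι, ℂ) →L[ℂ] ℓ²(ι, ℂ)} {k : ι → ι → ℝ} {S : ℝ} (hS : 0 ≤ S)
    (hA : ∀ i j, ‖matrixEntry A i j‖ ≤ k i j)
    (hrow : ∀ i, Summable (k i)) (hrowS : ∀ i, ∑' j, k i j ≤ S)
    (hcol : ∀ j, Summable fun i => k i j) (hcolS : ∀ j, ∑' i, k i j ≤ S) :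
    ‖A‖ ≤ S := by
  have hk : ∀ i j, 0 ≤ k i j := fun i j => (norm_nonneg _).trans (hA i j)
  refine A.opNorm_le_bound hS fun x => ?_
  refine lp.norm_le_of_forall_sum_le (by norm_num) (by positivity) fun s => ?_
  simp only [ENNReal.toReal_ofNat, Real.rpow_two]
  have hx := lp.hasSum_norm_sq x
  have hkx : ∀ i, HasSum (fun j => k i j * ‖x j‖ ^ 2) (∑' j, k i j * ‖x j‖ ^ 2) := fun i =>
    (((hrow i).mul_right (‖x‖ ^ 2)).of_nonneg_of_le (fun j => by have := hk i j; positivity)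
      fun j => mul_le_mul_of_nonneg_left
        (pow_le_pow_left₀ (norm_nonneg _) (lp.norm_apply_le_norm (by norm_num) x j) 2)
        (hk i j)).hasSum
  have hcol_s : ∀ j, ∑ i ∈ s, k i j ≤ S := fun j =>
    ((hcol j).sum_le_tsum s fun i _ => hk i j).trans (hcolS j)
  calc ∑ i ∈ s, ‖A x i‖ ^ 2 ≤ ∑ i ∈ s, S * ∑' j, k i j * ‖x j‖ ^ 2 :=
        Finset.sum_le_sum fun i _ => (norm_apply_sq_le_of_matrixEntry_le hA hrow x i).trans
          (mul_le_mul_of_nonneg_right (hrowS i) (tsum_nonneg fun j => by have := hk i j; positivity))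
    _ = S * ∑' j, ∑ i ∈ s, k i j * ‖x j‖ ^ 2 := by
        rw [← Finset.mul_sum, (hasSum_sum fun i _ => hkx i).tsum_eq]
    _ ≤ S * ∑' j, S * ‖x j‖ ^ 2 := by
        refine mul_le_mul_of_nonneg_left ?_ hS
        refine (hasSum_sum fun i _ => hkx i).summable.tsum_le_tsum (fun j => ?_)
          (hx.summable.mul_left S)
        rw [← Finset.sum_mul]
        exact mul_le_mul_of_nonneg_right (hcol_s j) (sq_nonneg _)
    _ = (S * ‖x‖) ^ 2 := by rw [tsum_mul_left, hx.tsum_eq]; ring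

end Schur

section ExpWeight

variable {ι : Type*}

def expWeight (f : ℓ^∞(ι, ℝ)) : ℓ²(ι, ℂ) →L[ℂ] ℓ²(ι, ℂ) :=
  lp.mapCLM 2 (fun i => Complex.exp (f i) • ContinuousLinearMap.id ℂ ℂ) (Real.exp_nonneg ‖f‖)
    fun i => (norm_smul_le _ _).trans <| by
      rw [Complex.norm_exp_ofReal]
      calc Real.exp (f i) * ‖ContinuousLinearMap.id ℂ ℂ‖ ≤ Real.exp (f i) * 1 :=
            mul_le_mul_of_nonneg_left ContinuousLinearMap.norm_id_le (Real.exp_nonneg _)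
        _ ≤ Real.exp ‖f‖ := by
            rw [mul_one, Real.exp_le_exp]
            exact (le_abs_self _).trans (lp.norm_apply_le_norm (by norm_num) f i)

lemma expWeight_apply (f : ℓ^∞(ι, ℝ)) (x : ℓ²(ι, ℂ)) (i : ι) :
    expWeight f x i = Complex.exp (f i) * x i := by
  simp [expWeight]

lemma expWeight_mul_expWeight_neg (f : ℓ^∞(ι, ℝ)) : expWeight f * expWeight (-f) = 1 := by
  ext x i
  simp [expWeight_apply, ← mul_assoc, ← Complex.exp_add]

variable [DecidableEq ι]

lemma expWeight_single (f : ℓ^∞(ι, ℝ)) (j : ι) (c : ℂ) :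
    expWeight f (lp.single 2 j c) = Complex.exp (f j) • lp.single 2 j c := by
  ext i
  rw [expWeight_apply, lp.coeFn_smul, Pi.smul_apply, smul_eq_mul]
  rcases eq_or_ne i j with rfl | hij
  · rfl
  · simp [lp.single_apply, Pi.single_eq_of_ne hij]

lemma matrixEntry_expWeight_mul_mul_expWeight_neg (f : ℓ^∞(ι, ℝ))
    (A : ℓ²(ι, ℂ) →L[ℂ] ℓ²(ι, ℂ)) (i j : ι) :
    matrixEntry (expWeight f * A * expWeight (-f)) i j =
      Complex.exp ((f i - f j : ℝ)) * matrixEntry A i j := by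
  simp only [matrixEntry, mul_apply_eq_comp, expWeight_single, map_smul,
    expWeight_apply, lp.coeFn_smul, lp.coeFn_neg, Pi.smul_apply, Pi.neg_apply, smul_eq_mul]
  rw [sub_eq_add_neg, Complex.ofReal_add, Complex.exp_add]
  push_cast
  ring

end ExpWeight

section NormedRing

variable {R : Type*} [NormedRing R]

lemma norm_mul_inverse_mul_le {a b u : R} (hab : a * b = 1) (hba : b * a = 1) (hu : IsUnit u)
    (h : ‖Ring.inverse u‖ * ‖a * u * b - u‖ ≤ 1 / 2) :
    ‖a * Ring.inverse u * b‖ ≤ 2 * ‖Ring.inverse u‖ := by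
  set r := Ring.inverse u
  set X := a * r * b
  have hru : r * u = 1 := Ring.inverse_mul_cancel u hu
  have hur : u * r = 1 := Ring.mul_inverse_cancel u hu
  -- `X` is the inverse of `a * u * b`, so it solves `X = r - r (a u b - u) X`.
  have hX : X = r - r * (a * u * b - u) * X := by
    have : r * (a * u * b - u) * X = r - X := by
      simp only [X, sub_mul, mul_sub, mul_assoc]
      rw [← mul_assoc b a, hba, one_mul, ← mul_assoc u r, hur, one_mul, hab, mul_one,
        ← mul_assoc r u, hru, one_mul]
    rw [this, sub_sub_cancel]
  have : ‖X‖ ≤ ‖r‖ + ‖r‖ * ‖a * u * b - u‖ * ‖X‖ :=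
    calc ‖X‖ ≤ ‖r‖ + ‖r * (a * u * b - u) * X‖ := by
          conv_lhs => rw [hX]
          exact norm_sub_le _ _
      _ ≤ ‖r‖ + ‖r‖ * ‖a * u * b - u‖ * ‖X‖ := by
          gcongr
          exact (norm_mul_le _ _).trans (mul_le_mul_of_nonneg_right (norm_mul_le _ _)
            (norm_nonneg _))
  nlinarith [norm_nonneg X]

variable {𝕜 A : Type*} [NontriviallyNormedField 𝕜] [NormedRing A] [NormedAlgebra 𝕜 A]

lemma isUnit_sub_smul_one_of_notMem_spectrum {a : A} {z : 𝕜} (hz : z ∉ spectrum 𝕜 a) :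
    IsUnit (a - z • 1) := by
  simpa [Algebra.algebraMap_eq_smul_one] using (spectrum.notMem_iff.mp hz).neg

lemma IsCompact.exists_forall_norm_inverse_sub_smul_one_le [CompleteSpace A] (a : A)
    {K : Set 𝕜} (hK : IsCompact K) (hKa : ∀ z ∈ K, z ∉ spectrum 𝕜 a) :
    ∃ M, ∀ z ∈ K, ‖Ring.inverse (a - z • 1)‖ ≤ M := by
  refine hK.exists_bound_of_continuousOn fun z hz => ?_
  obtain ⟨u, hu⟩ := isUnit_sub_smul_one_of_notMem_spectrum (hKa z hz)
  exact ((NormedRing.inverse_continuousAt u).comp_of_eq (f := fun z : 𝕜 => a - z • (1 : A))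
    (by fun_prop) hu.symm).continuousWithinAt

end NormedRing

section CombesThomas

variable {ι : Type*} [DecidableEq ι]

theorem norm_matrixEntry_inverse_sub_smul_one_le {H : ℓ²(ι, ℂ) →L[ℂ] ℓ²(ι, ℂ)} {z : ℂ}
    (hz : IsUnit (H - z • 1)) (f : ℓ^∞(ι, ℝ))
    (hf : ‖Ring.inverse (H - z • 1)‖ * ‖expWeight f * H * expWeight (-f) - H‖ ≤ 1 / 2)
    (i j : ι) :
    ‖matrixEntry (Ring.inverse (H - z • 1)) i j‖ ≤
      2 * ‖Ring.inverse (H - z • 1)‖ * Real.exp (-(f i - f j)) := by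
  have hE := expWeight_mul_expWeight_neg f
  have hE' : expWeight (-f) * expWeight f = 1 := by
    simpa using expWeight_mul_expWeight_neg (-f)
  have hshift : expWeight f * (H - z • 1) * expWeight (-f) - (H - z • 1) =
      expWeight f * H * expWeight (-f) - H := by
    simp only [mul_sub, sub_mul, mul_smul_comm, smul_mul_assoc, mul_one, hE]
    abel
  have h := (norm_matrixEntry_le _ i j).trans
    (norm_mul_inverse_mul_le hE hE' hz (hshift ▸ hf))
  rw [matrixEntry_expWeight_mul_mul_expWeight_neg, norm_mul, Complex.norm_exp_ofReal] at h
  rw [Real.exp_neg, ← div_eq_mul_inv, le_div_iff₀ (Real.exp_pos _), mul_comm]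
  exact h

theorem norm_matrixEntry_expWeight_conj_sub_le {H : ℓ²(ι, ℂ) →L[ℂ] ℓ²(ι, ℂ)}
    {d : ι → ι → ℝ} {C β₀ β : ℝ} (hβ₀ : 0 < β₀) (hC : 0 ≤ C) (hβ : 0 ≤ β) (hββ₀ : β ≤ β₀ / 2)
    (hH : ∀ i j, ‖matrixEntry H i j‖ ≤ C * Real.exp (-β₀ * d i j))
    {g : ℓ^∞(ι, ℝ)} (hg : ∀ i j, |g i - g j| ≤ d i j) (i j : ι) :
    ‖matrixEntry (expWeight (β • g) * H * expWeight (-(β • g)) - H) i j‖ ≤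
      β * (4 * C / β₀) * Real.exp (-(β₀ / 4) * d i j) := by
  set δ := d i j
  set t := β * (g i - g j)
  have hδ : 0 ≤ δ := (abs_nonneg _).trans (hg i j)
  have ht : |t| ≤ β * δ := by
    rw [abs_mul, abs_of_nonneg hβ]
    exact mul_le_mul_of_nonneg_left (hg i j) hβ
  have hexp : ‖Complex.exp t - 1‖ ≤ β * δ * Real.exp (β * δ) := by
    have := Complex.norm_exp_sub_sum_le_norm_mul_exp t 1
    simp only [Finset.range_one, Finset.sum_singleton, pow_zero, Nat.factorial_zero,
      Nat.cast_one, div_one, pow_one, Complex.norm_real, Real.norm_eq_abs] at this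
    exact this.trans (mul_le_mul ht (Real.exp_le_exp.mpr ht) (Real.exp_nonneg _) (by positivity))
  -- `δ ≤ (4 / β₀) e^{β₀ δ / 4}` absorbs the linear factor into the exponential decay.
  have hlin : δ ≤ 4 / β₀ * Real.exp (β₀ / 4 * δ) := by
    have := Real.add_one_le_exp (β₀ / 4 * δ)
    rw [div_mul_eq_mul_div, le_div_iff₀ hβ₀]
    nlinarith
  rw [matrixEntry_sub, matrixEntry_expWeight_mul_mul_expWeight_neg, ← sub_one_mul, norm_mul]
  have hgt : ((β • g) i - (β • g) j : ℝ) = t := by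
    simp only [t, lp.coeFn_smul, Pi.smul_apply, smul_eq_mul, mul_sub]
  rw [hgt]
  calc ‖Complex.exp t - 1‖ * ‖matrixEntry H i j‖
      ≤ β * δ * Real.exp (β * δ) * (C * Real.exp (-β₀ * δ)) :=
        mul_le_mul hexp (hH i j) (norm_nonneg _) (by positivity)
    _ ≤ β * C * (δ * Real.exp (-(β₀ / 2) * δ)) := by
        rw [show β * δ * Real.exp (β * δ) * (C * Real.exp (-β₀ * δ)) =
          β * C * (δ * Real.exp (β * δ + -β₀ * δ)) by rw [Real.exp_add]; ring]
        gcongr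
        nlinarith
    _ ≤ β * C * (4 / β₀ * Real.exp (β₀ / 4 * δ) * Real.exp (-(β₀ / 2) * δ)) := by
        gcongr
    _ = β * (4 * C / β₀) * Real.exp (-(β₀ / 4) * δ) := by
        rw [mul_assoc (4 / β₀), ← Real.exp_add]
        ring_nf

end CombesThomas

section Lattice

lemma znorm_nonneg (γ : ℤ × ℤ) : 0 ≤ znorm γ := by
  unfold znorm; positivity

lemma abs_znorm_sub_sub_znorm_sub_le (a b c : ℤ × ℤ) :
    |znorm (a - c) - znorm (b - c)| ≤ znorm (a - b) := by
  simp only [znorm, Prod.fst_sub, Prod.snd_sub, Int.cast_sub]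
  have h₁ := abs_abs_sub_abs_le_abs_sub ((a.1 : ℝ) - c.1) (b.1 - c.1)
  have h₂ := abs_abs_sub_abs_le_abs_sub ((a.2 : ℝ) - c.2) (b.2 - c.2)
  rw [sub_sub_sub_cancel_right] at h₁ h₂
  rw [abs_le] at h₁ h₂ ⊢
  constructor <;> linarith

lemma summable_exp_neg_mul_abs_int {c : ℝ} (hc : 0 < c) :
    Summable fun n : ℤ => Real.exp (-c * |(n : ℝ)|) := by
  have h : Summable fun n : ℕ => Real.exp (n * -c) :=
    Real.summable_exp_nat_mul_iff.mpr (neg_neg_of_pos hc)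
  refine Summable.of_nat_of_neg ?_ ?_ <;> simpa [mul_comm] using h

lemma summable_exp_neg_mul_znorm {c : ℝ} (hc : 0 < c) :
    Summable fun v : ℤ × ℤ => Real.exp (-c * znorm v) := by
  have := (summable_exp_neg_mul_abs_int hc).mul_of_nonneg (summable_exp_neg_mul_abs_int hc)
    (fun _ => Real.exp_nonneg _) (fun _ => Real.exp_nonneg _)
  simpa [znorm, mul_add, Real.exp_add] using this

lemma HasSum.prod_fintype_right {G κ : Type*} [Fintype κ] {F : G → ℝ} {s : ℝ}
    (hF : HasSum F s) (hF0 : ∀ v, 0 ≤ F v) :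
    HasSum (fun j : G × κ => F j.1) (Fintype.card κ * s) := by
  have := hF.mul (hasSum_fintype fun _ : κ => (1 : ℝ))
    (hF.summable.mul_of_nonneg (.of_finite) hF0 fun _ => zero_le_one)
  simpa [mul_comm] using this

def truncDist (κ : Type*) (γ γ' : ℤ × ℤ) : ℓ^∞((ℤ × ℤ) × κ, ℝ) :=
  ⟨fun i => min (znorm (i.1 - γ')) (znorm (γ - γ')), memℓp_infty ⟨znorm (γ - γ'), by
    rintro _ ⟨i, rfl⟩
    dsimp only
    rw [Real.norm_of_nonneg (le_min (znorm_nonneg _) (znorm_nonneg _))]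
    exact min_le_right _ _⟩⟩

lemma truncDist_apply (κ : Type*) (γ γ' : ℤ × ℤ) (i : (ℤ × ℤ) × κ) :
    truncDist κ γ γ' i = min (znorm (i.1 - γ')) (znorm (γ - γ')) := rfl

lemma abs_truncDist_sub_le (κ : Type*) (γ γ' : ℤ × ℤ) (i j : (ℤ × ℤ) × κ) :
    |truncDist κ γ γ' i - truncDist κ γ γ' j| ≤ znorm (i.1 - j.1) := by
  refine (abs_min_sub_min_le_max _ _ _ _).trans ?_
  rw [sub_self, abs_zero, max_eq_left (abs_nonneg _)]
  exact abs_znorm_sub_sub_znorm_sub_le _ _ _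

variable {κ : Type*} [Fintype κ]

def conjugationConst (κ : Type*) [Fintype κ] (C β₀ : ℝ) : ℝ :=
  4 * C / β₀ * (Fintype.card κ * ∑' v, Real.exp (-(β₀ / 4) * znorm v))

lemma conjugationConst_nonneg {C β₀ : ℝ} (hC : 0 ≤ C) (hβ₀ : 0 ≤ β₀) :
    0 ≤ conjugationConst κ C β₀ := by
  have : 0 ≤ ∑' v, Real.exp (-(β₀ / 4) * znorm v) := tsum_nonneg fun _ => Real.exp_nonneg _
  unfold conjugationConst
  positivity

variable [DecidableEq κ]

theorem norm_expWeight_conj_sub_le_of_lattice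
    {H : ℓ²((ℤ × ℤ) × κ, ℂ) →L[ℂ] ℓ²((ℤ × ℤ) × κ, ℂ)} {C β₀ β : ℝ}
    (hβ₀ : 0 < β₀) (hC : 0 ≤ C) (hβ : 0 ≤ β) (hββ₀ : β ≤ β₀ / 2)
    (hH : ∀ i j, ‖matrixEntry H i j‖ ≤ C * Real.exp (-β₀ * znorm (i.1 - j.1)))
    {g : ℓ^∞((ℤ × ℤ) × κ, ℝ)} (hg : ∀ i j, |g i - g j| ≤ znorm (i.1 - j.1)) :
    ‖expWeight (β • g) * H * expWeight (-(β • g)) - H‖ ≤ β * conjugationConst κ C β₀ := by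
  set F : ℤ × ℤ → ℝ := fun v => β * (4 * C / β₀) * Real.exp (-(β₀ / 4) * znorm v)
  have hF0 : ∀ v, 0 ≤ F v := fun v => by positivity
  have hF : HasSum F (β * (4 * C / β₀) * ∑' v, Real.exp (-(β₀ / 4) * znorm v)) :=
    (summable_exp_neg_mul_znorm (by positivity)).hasSum.mul_left _
  set S := Fintype.card κ * (β * (4 * C / β₀) * ∑' v, Real.exp (-(β₀ / 4) * znorm v))
  have hrow (i : (ℤ × ℤ) × κ) : HasSum (fun j : (ℤ × ℤ) × κ => F (i.1 - j.1)) S :=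
    ((Equiv.subLeft i.1).hasSum_iff.mpr hF).prod_fintype_right fun _ => hF0 _
  have hcol (j : (ℤ × ℤ) × κ) : HasSum (fun i : (ℤ × ℤ) × κ => F (i.1 - j.1)) S :=
    ((Equiv.subRight j.1).hasSum_iff.mpr hF).prod_fintype_right fun _ => hF0 _
  have hS : 0 ≤ S := mul_nonneg (Nat.cast_nonneg _) (hF.nonneg hF0)
  refine (opNorm_le_of_schur hS (norm_matrixEntry_expWeight_conj_sub_le hβ₀ hC hβ hββ₀ hH hg)
    (fun i => (hrow i).summable) (fun i => (hrow i).tsum_eq.le)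
    (fun j => (hcol j).summable) (fun j => (hcol j).tsum_eq.le)).trans_eq ?_
  rw [conjugationConst]
  ring

theorem norm_matrixEntry_inverse_sub_smul_one_le_of_lattice
    {H : ℓ²((ℤ × ℤ) × κ, ℂ) →L[ℂ] ℓ²((ℤ × ℤ) × κ, ℂ)} {z : ℂ} (hz : IsUnit (H - z • 1))
    {C β₀ β : ℝ} (hβ₀ : 0 < β₀) (hC : 0 ≤ C) (hβ : 0 ≤ β) (hββ₀ : β ≤ β₀ / 2)
    (hH : ∀ i j, ‖matrixEntry H i j‖ ≤ C * Real.exp (-β₀ * znorm (i.1 - j.1)))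
    (hsmall : ‖Ring.inverse (H - z • 1)‖ * (β * conjugationConst κ C β₀) ≤ 1 / 2)
    (γ γ' : ℤ × ℤ) (x x' : κ) :
    ‖matrixEntry (Ring.inverse (H - z • 1)) (γ, x) (γ', x')‖ ≤
      2 * ‖Ring.inverse (H - z • 1)‖ * Real.exp (-β * znorm (γ - γ')) := by
  set g := truncDist κ γ γ'
  have hconj := norm_expWeight_conj_sub_le_of_lattice hβ₀ hC hβ hββ₀ hH
    (abs_truncDist_sub_le κ γ γ')
  have hg : (β • g) (γ, x) - (β • g) (γ', x') = β * znorm (γ - γ') := by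
    have h0 : znorm 0 = 0 := by simp [znorm]
    simp [g, truncDist_apply, h0, znorm_nonneg]
  have h := norm_matrixEntry_inverse_sub_smul_one_le hz (β • g)
    ((mul_le_mul_of_nonneg_left hconj (norm_nonneg _)).trans hsmall) (γ, x) (γ', x')
  rwa [hg, ← neg_mul] at h

lemma inner_deltaVec_eq_matrixEntry (Q : ℕ) (A : MagneticSpace Q →L[ℂ] MagneticSpace Q)
    (γ γ' : ℤ × ℤ) (x x' : Fin Q) :
    inner ℂ (deltaVec Q γ x) (A (deltaVec Q γ' x')) = matrixEntry A (γ, x) (γ', x') := by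
  simp [deltaVec, matrixEntry, lp.inner_single_left]

end Lattice

theorem combes_thomas_discrete_general (Q : ℕ) (C β₀ : ℝ) (hβ₀ : 0 < β₀)
    (H₀ : MagneticSpace Q →L[ℂ] MagneticSpace Q)
    (hbound : ∀ (γ γ' : ℤ × ℤ) (x x' : Fin Q),
      ‖(inner ℂ (deltaVec Q γ x) (H₀ (deltaVec Q γ' x')) : ℂ)‖ ≤
        C * Real.exp (-β₀ * znorm (γ - γ')))
    (K : Set ℂ) (hK : IsCompact K)
    (hres : ∀ z ∈ K, z ∉ spectrum ℂ H₀) :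
    ∃ C' > (0 : ℝ), ∃ β : ℝ, 0 < β ∧ β < β₀ ∧
      ∀ z ∈ K, ∀ (γ γ' : ℤ × ℤ) (x x' : Fin Q),
        ‖(inner ℂ (deltaVec Q γ x)
              (Ring.inverse (H₀ - z • (1 : MagneticSpace Q →L[ℂ] MagneticSpace Q))
                (deltaVec Q γ' x')) : ℂ)‖ ≤
          C' * Real.exp (-β * znorm (γ - γ')) := by
  obtain ⟨M, hM⟩ := hK.exists_forall_norm_inverse_sub_smul_one_le H₀ hres
  have hH (i j : (ℤ × ℤ) × Fin Q) :
      ‖matrixEntry H₀ i j‖ ≤ max C 0 * Real.exp (-β₀ * znorm (i.1 - j.1)) := by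
    rw [← inner_deltaVec_eq_matrixEntry]
    exact (hbound _ _ _ _).trans (by gcongr; exact le_max_left _ _)
  set S := conjugationConst (Fin Q) (max C 0) β₀
  have hS : 0 ≤ S := conjugationConst_nonneg (le_max_right C 0) hβ₀.le
  set M' := max M 1
  set β := min (β₀ / 2) (1 / (2 * M' * S + 1))
  have hβ : 0 < β := by positivity
  have hβS : M' * (β * S) ≤ 1 / 2 := by
    have h := min_le_right (β₀ / 2) (1 / (2 * M' * S + 1))
    rw [le_div_iff₀ (by positivity)] at h
    nlinarith [le_max_right M 1]
  refine ⟨2 * M', by positivity, β, hβ, (min_le_left _ _).trans_lt (by linarith), ?_⟩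
  intro z hz γ γ' x x'
  have hRz : ‖Ring.inverse (H₀ - z • 1)‖ ≤ M' := (hM z hz).trans (le_max_left _ _)
  rw [inner_deltaVec_eq_matrixEntry]
  refine (norm_matrixEntry_inverse_sub_smul_one_le_of_lattice
    (isUnit_sub_smul_one_of_notMem_spectrum (hres z hz)) hβ₀ (le_max_right C 0) hβ.le
    (min_le_left _ _) hH ((mul_le_mul_of_nonneg_right hRz (by positivity)).trans hβS)
    γ γ' x x').trans ?_
  gcongr

/-- **Combes–Thomas estimate, discrete case.** If the bounded
self-adjoint operator `H₀` on `ℓ²(ℤ²) ⊗ ℂ^Q` has matrix elements bounded by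
`C e^{−β₀‖γ−γ'‖}`, and `K` is a compact subset of its resolvent set, then there are
`C' > 0` and `0 < β < β₀` with
`sup_{z ∈ K} |(H₀ − z)⁻¹(γ,x;γ',x')| ≤ C' e^{−β‖γ−γ'‖}`. -/
theorem combes_thomas_discrete (Q : ℕ) (C β₀ : ℝ) (hβ₀ : 0 < β₀)
    (H₀ : MagneticSpace Q →L[ℂ] MagneticSpace Q)
    (hsa : IsSelfAdjoint H₀)
    (hbound : ∀ (γ γ' : ℤ × ℤ) (x x' : Fin Q),
      ‖(inner ℂ (deltaVec Q γ x) (H₀ (deltaVec Q γ' x')) : ℂ)‖ ≤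
        C * Real.exp (-β₀ * znorm (γ - γ')))
    (K : Set ℂ) (hK : IsCompact K)
    (hres : ∀ z ∈ K, z ∉ spectrum ℂ H₀) :
    ∃ C' > (0 : ℝ), ∃ β : ℝ, 0 < β ∧ β < β₀ ∧
      ∀ z ∈ K, ∀ (γ γ' : ℤ × ℤ) (x x' : Fin Q),
        ‖(inner ℂ (deltaVec Q γ x)
              (Ring.inverse (H₀ - z • (1 : MagneticSpace Q →L[ℂ] MagneticSpace Q))
                (deltaVec Q γ' x')) : ℂ)‖ ≤
          C' * Real.exp (-β * znorm (γ - γ')) :=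
  combes_thomas_discrete_general Q C β₀ hβ₀ H₀ hbound K hK hres
end
end
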